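/- For all points a, b, c ∈ ℝ² and every point e on the segment from a to c (e ∈ [a, c]), the diametral disk D(b,e) is contained in D(a,b) ∪ D(b,c). -/

import Mathlib

open scoped RealInnerProductSpace

noncomputable section

/-- The Euclidean plane. -/
abbrev Pt := EuclideanSpace ℝ (Fin 2)

/-- The closed disk with diameter `ab`. -/
def diskD (a b : Pt) : Set Pt := Metric.closedBall (midpoint ℝ a b) (dist a b / 2)

/-- `a` and `b` are adjacent in the witness Gabriel graph with witness set `W`. -/
def gabrielEdge (W : Set Pt) (a b : Pt) : Prop := (diskD a b \ {a, b}) ∩ W = ∅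

/-- General position: no three points collinear, no four points concyclic. -/
def GenPos (S : Set Pt) : Prop :=
  (∀ a ∈ S, ∀ b ∈ S, ∀ c ∈ S, a ≠ b → a ≠ c → b ≠ c → ¬ Collinear ℝ ({a, b, c} : Set Pt)) ∧
  (∀ a ∈ S, ∀ b ∈ S, ∀ c ∈ S, ∀ d ∈ S, a ≠ b → a ≠ c → a ≠ d → b ≠ c → b ≠ d → c ≠ d →
    ¬ EuclideanGeometry.Cospherical ({a, b, c, d} : Set Pt))

/-- Planar determinant `u₁v₂ − u₂v₁`. -/
def det2 (u v : Pt) : ℝ := u 0 * v 1 - u 1 * v 0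

/-- Counterclockwise convex position. -/
def CCWConvexPos {m : ℕ} (q : Fin m → Pt) : Prop :=
  ∀ i j k : Fin m, i < j → j < k → 0 < det2 (q j - q i) (q k - q i)

/-- Cyclic successor in `Fin m`. -/
def cyclicSucc {m : ℕ} (hm : 0 < m) (i : Fin m) : Fin m :=
  ⟨((i : ℕ) + 1) % m, Nat.mod_lt _ hm⟩

/-!
By Thales, `x ∈ D(b, z)` iff `⟪x - b, x - z⟫ ≤ 0`, and this expression is affine in `z`. Hence the
points `z` with `x ∉ D(b, z)` form an open half-plane; being convex, it contains `e` as soon as it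
contains `a` and `c`.
-/

section InnerProductSpace

variable {E : Type*} [NormedAddCommGroup E] [InnerProductSpace ℝ E]

theorem real_inner_sub_sub_eq_dist_midpoint_sq (a b x : E) :
    ⟪x - a, x - b⟫ = dist x (midpoint ℝ a b) ^ 2 - (dist a b / 2) ^ 2 := by
  have hm : midpoint ℝ a b = (2⁻¹ : ℝ) • (a + b) := by
    rw [midpoint_eq_smul_add, invOf_eq_inv]
  have hxa : x - a = (x - midpoint ℝ a b) + (2⁻¹ : ℝ) • (b - a) := by rw [hm]; module
  have hxb : x - b = (x - midpoint ℝ a b) - (2⁻¹ : ℝ) • (b - a) := by rw [hm]; module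
  have hdiff (u w : E) : ⟪u + w, u - w⟫ = ‖u‖ ^ 2 - ‖w‖ ^ 2 := by
    rw [inner_add_left, inner_sub_right, inner_sub_right, real_inner_comm u w,
      real_inner_self_eq_norm_sq, real_inner_self_eq_norm_sq]
    ring
  rw [hxa, hxb, hdiff, dist_eq_norm, dist_eq_norm', norm_smul]
  norm_num
  ring

theorem mem_closedBall_midpoint_iff_real_inner_nonpos (a b x : E) :
    x ∈ Metric.closedBall (midpoint ℝ a b) (dist a b / 2) ↔ ⟪x - a, x - b⟫ ≤ 0 := by
  rw [Metric.mem_closedBall, real_inner_sub_sub_eq_dist_midpoint_sq, sub_nonpos,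
    sq_le_sq₀ dist_nonneg (by positivity)]

end InnerProductSpace

theorem diskD_comm (a b : Pt) : diskD a b = diskD b a := by
  rw [diskD, diskD, midpoint_comm, dist_comm]

theorem mem_diskD_iff (a b x : Pt) : x ∈ diskD a b ↔ ⟪x - a, x - b⟫ ≤ 0 :=
  mem_closedBall_midpoint_iff_real_inner_nonpos a b x

theorem convex_setOf_notMem_diskD (b x : Pt) : Convex ℝ {z | x ∉ diskD b z} := by
  have hset : {z | x ∉ diskD b z} = {z | ⟪x - b, z⟫ < ⟪x - b, x⟫} := by
    ext z
    simp only [Set.mem_ofPred_eq, mem_diskD_iff, inner_sub_right, not_le, sub_pos]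
  rw [hset]
  exact convex_halfSpace_lt (innerₛₗ ℝ (x - b)).isLinear _

/-- For `e` on segment `[a,c]`, the disk `D(b,e)` is contained in
`D(a,b) ∪ D(b,c)`. -/
theorem disk_on_segment_subset_union
    (a b c e : Pt) (he : e ∈ segment ℝ a c) :
    diskD b e ⊆ diskD a b ∪ diskD b c := by
  intro x hx
  by_contra hxU
  rw [Set.mem_union, not_or, diskD_comm a b] at hxU
  exact convex_setOf_notMem_diskD b x |>.segment_subset hxU.1 hxU.2 he hx
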